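/- For every real number s > 0 one has 2s(s² − 1) + (s² + 1)²·arccos(2/(s² + 1) − 1) > 0. -/

import Mathlib

/-!
Since `cos (2 * arctan s) = 2 / (s ^ 2 + 1) - 1`, the arccosine equals `2 * arctan s`. On the other
hand `sin (2 * arctan s) = 2 * s / (1 + s ^ 2)`, so `sin t < t` gives `arctan s > s / (1 + s ^ 2)`.
Hence the expression exceeds `2 * s * (s ^ 2 - 1) + 2 * s * (s ^ 2 + 1) = 4 * s ^ 3 > 0`.
-/

open Real

namespace Real

theorem cos_two_mul_arctan (x : ℝ) : cos (2 * arctan x) = 2 / (x ^ 2 + 1) - 1 := by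
  rw [cos_two_mul, cos_sq_arctan, add_comm]
  ring

theorem sin_two_mul_arctan (x : ℝ) : sin (2 * arctan x) = 2 * x / (1 + x ^ 2) := by
  rw [sin_two_mul, sin_arctan, cos_arctan, mul_assoc, div_mul_div_comm, mul_one,
    mul_self_sqrt (by positivity), mul_div_assoc]

theorem arccos_two_div_sq_add_one_sub_one (x : ℝ) :
    arccos (2 / (x ^ 2 + 1) - 1) = 2 * arctan |x| := by
  rw [← sq_abs, ← cos_two_mul_arctan, arccos_cos]
  · exact mul_nonneg zero_le_two (arctan_nonneg.mpr (abs_nonneg x))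
  · linarith [arctan_lt_pi_div_two |x|]

theorem div_one_add_sq_lt_arctan {x : ℝ} (hx : 0 < x) : x / (1 + x ^ 2) < arctan x := by
  have h := sin_lt (mul_pos two_pos (arctan_pos.mpr hx))
  rw [sin_two_mul_arctan, mul_div_assoc] at h
  linarith

end Real

theorem wronskian_positivity (s : ℝ) (hs : 0 < s) :
    0 < 2 * s * (s ^ 2 - 1) + (s ^ 2 + 1) ^ 2 * Real.arccos (2 / (s ^ 2 + 1) - 1) := by
  rw [arccos_two_div_sq_add_one_sub_one, abs_of_pos hs]
  have hlt : s * (s ^ 2 + 1) < (s ^ 2 + 1) ^ 2 * arctan s := by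
    have h := mul_lt_mul_of_pos_left (div_one_add_sq_lt_arctan hs)
      (by positivity : (0 : ℝ) < (s ^ 2 + 1) ^ 2)
    have hcancel : (s ^ 2 + 1) ^ 2 * (s / (1 + s ^ 2)) = s * (s ^ 2 + 1) := by
      field_simp
      ring
    rwa [hcancel] at h
  linarith [pow_pos hs 3]
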